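/- As τ → ∞, G₁₁(τ) + (4/π²)·(4τ + log 4 − 1) → 0 and G₁₂(τ) − (4/π²)·(4τ + log 4) → 0, where G₁₁(τ) = −(4/(π²κ(τ)²))·(E(κ(τ)) − κ̃(τ)²·K(κ(τ)))·(K(κ(τ)) − E(κ(τ))) and G₁₂(τ) = (4/π²)·E(κ(τ))·K(κ(τ)). -/

import Mathlib

open Real Filter Topology

/-- Complete elliptic integral of the first kind. -/
noncomputable def ellipticK (k : ℝ) : ℝ :=
  ∫ α in (0:ℝ)..(Real.pi / 2), 1 / Real.sqrt (1 - k ^ 2 * Real.sin α ^ 2)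

/-- Complete elliptic integral of the second kind. -/
noncomputable def ellipticE (k : ℝ) : ℝ :=
  ∫ α in (0:ℝ)..(Real.pi / 2), Real.sqrt (1 - k ^ 2 * Real.sin α ^ 2)

/-- κ(τ) = √(1 − e^{−8τ}). -/
noncomputable def kappa (τ : ℝ) : ℝ := Real.sqrt (1 - Real.exp (-8 * τ))

/-- κ̃(τ) = e^{−4τ}. -/
noncomputable def kappaT (τ : ℝ) : ℝ := Real.exp (-4 * τ)

/-- Diagonal entry of the reduced covariance matrix of the resonant mode. -/
noncomputable def G₁₁ (τ : ℝ) : ℝ :=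
  -(4 / (Real.pi ^ 2 * kappa τ ^ 2)) *
    ((ellipticE (kappa τ) - kappaT τ ^ 2 * ellipticK (kappa τ)) *
      (ellipticK (kappa τ) - ellipticE (kappa τ)))

/-- Off-diagonal entry of the reduced covariance matrix of the resonant mode. -/
noncomputable def G₁₂ (τ : ℝ) : ℝ :=
  (4 / Real.pi ^ 2) * (ellipticE (kappa τ) * ellipticK (kappa τ))

/-!
With `k' = √(1 - k²)` (here `k' = κ̃`) one has `1 - k² sin² α = cos² α + k'² sin² α`.
The integral of `sin α / √(cos² α + k'²)` over `[0, π/2]` is `log (1 + √(1 + k'²)) - log k'`,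
and subtracting it from the integrand of `K` leaves a function bounded by `2` that converges to
`cos α / (1 + sin α)`, whose integral is `log 2`; by dominated convergence `K + log k' → log 4`.
Pointwise `cos α ≤ √(1 - k² sin² α) ≤ cos α + k'² / √(1 - k² sin² α)`, so `1 ≤ E ≤ 1 + k'² K`.
Since `k' K → 0`, what is left of both entries tends to `0`.
-/

open MeasureTheory Set intervalIntegral

lemma one_sub_sqrt_one_sub_sq_sq_mul_sin_sq {ε : ℝ} (hε : ε ^ 2 ≤ 1) (α : ℝ) :
    1 - √(1 - ε ^ 2) ^ 2 * sin α ^ 2 = cos α ^ 2 + ε ^ 2 * sin α ^ 2 := by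
  rw [sq_sqrt (sub_nonneg.2 hε)]
  linear_combination -(sin_sq_add_cos_sq α)

lemma ellipticK_sqrt_one_sub_sq {ε : ℝ} (hε : ε ^ 2 ≤ 1) :
    ellipticK √(1 - ε ^ 2) = ∫ α in 0..π / 2, 1 / √(cos α ^ 2 + ε ^ 2 * sin α ^ 2) := by
  simp only [ellipticK, one_sub_sqrt_one_sub_sq_sq_mul_sin_sq hε]

lemma cos_sq_add_sq_mul_sin_sq_pos {ε : ℝ} (hε : ε ≠ 0) (α : ℝ) :
    0 < cos α ^ 2 + ε ^ 2 * sin α ^ 2 := by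
  rcases eq_or_ne (cos α) 0 with h | h
  · have hsin : sin α ^ 2 = 1 := by simpa [h] using sin_sq_add_cos_sq α
    rw [h, hsin]
    positivity
  · positivity

lemma continuous_inv_sqrt_cos_sq_add_sq_mul_sin_sq {ε : ℝ} (hε : ε ≠ 0) :
    Continuous fun α => 1 / √(cos α ^ 2 + ε ^ 2 * sin α ^ 2) :=
  continuous_const.div (by fun_prop) fun α => (sqrt_pos.2 (cos_sq_add_sq_mul_sin_sq_pos hε α)).ne'

lemma continuous_sin_div_sqrt_cos_sq_add_sq {ε : ℝ} (hε : ε ≠ 0) :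
    Continuous fun α => sin α / √(cos α ^ 2 + ε ^ 2) :=
  continuous_sin.div (by fun_prop) fun α => (sqrt_pos.2 (by positivity)).ne'

lemma hasDerivAt_neg_log_cos_add_sqrt {ε : ℝ} (hε : 0 < ε) (α : ℝ) :
    HasDerivAt (fun α => -log (cos α + √(cos α ^ 2 + ε ^ 2)))
      (sin α / √(cos α ^ 2 + ε ^ 2)) α := by
  have hB : 0 < cos α ^ 2 + ε ^ 2 := by positivity
  have hpos : 0 < cos α + √(cos α ^ 2 + ε ^ 2) := by
    have : |cos α| < √(cos α ^ 2 + ε ^ 2) := by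
      rw [← sqrt_sq_eq_abs]; exact sqrt_lt_sqrt (sq_nonneg _) (by linarith [sq_pos_of_pos hε])
    linarith [neg_abs_le (cos α)]
  have h : HasDerivAt (fun α => √(cos α ^ 2 + ε ^ 2))
      (2 * cos α * -sin α / (2 * √(cos α ^ 2 + ε ^ 2))) α := by
    simpa using (((hasDerivAt_cos α).pow 2).add_const (ε ^ 2)).sqrt hB.ne'
  refine (((hasDerivAt_cos α).add h).log hpos.ne').neg.congr_deriv ?_
  simp only [Pi.add_apply]
  field_simp
  ring

lemma integral_sin_div_sqrt_cos_sq_add_sq {ε : ℝ} (hε : 0 < ε) :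
    ∫ α in 0..π / 2, sin α / √(cos α ^ 2 + ε ^ 2) = log (1 + √(1 + ε ^ 2)) - log ε := by
  rw [integral_eq_sub_of_hasDerivAt (fun α _ => hasDerivAt_neg_log_cos_add_sqrt hε α)]
  · rw [cos_pi_div_two, cos_zero, zero_pow two_ne_zero, zero_add, zero_add, one_pow,
      sqrt_sq hε.le]
    ring
  · exact (continuous_sin_div_sqrt_cos_sq_add_sq hε.ne').intervalIntegrable _ _

lemma integral_cos_div_one_add_sin : ∫ α in 0..π / 2, cos α / (1 + sin α) = log 2 := by
  have hpos : ∀ α ∈ uIcc 0 (π / 2), 0 < 1 + sin α := fun α hα => by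
    rw [uIcc_of_le (by positivity)] at hα
    linarith [sin_nonneg_of_nonneg_of_le_pi hα.1 (by linarith [hα.2, pi_pos])]
  rw [integral_eq_sub_of_hasDerivAt (f := fun α => log (1 + sin α))
    (fun α hα => ((hasDerivAt_sin α).const_add 1).log (hpos α hα).ne')]
  · norm_num
  · exact (continuous_cos.continuousOn.div (by fun_prop) fun α hα =>
      (hpos α hα).ne').intervalIntegrable

-- The numerator `b - s * a` of the difference is at most `2 * a * b`,
-- since `b - a ≤ ε * c ≤ a * b` and `(1 - s) * a ≤ c * a ≤ b * a`.
lemma abs_inv_sqrt_sub_div_sqrt_le {c s ε : ℝ} (hc : 0 ≤ c) (hs : 0 ≤ s) (hsc : s ^ 2 + c ^ 2 = 1)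
    (hε : 0 < ε) (hε1 : ε ≤ 1) :
    |1 / √(c ^ 2 + ε ^ 2 * s ^ 2) - s / √(c ^ 2 + ε ^ 2)| ≤ 2 := by
  set a := √(c ^ 2 + ε ^ 2 * s ^ 2)
  set b := √(c ^ 2 + ε ^ 2)
  have hs1 : s ≤ 1 := by nlinarith
  have hεa : ε ≤ a := le_sqrt_of_sq_le (by nlinarith [mul_le_mul_of_nonneg_right hε1 hε.le])
  have hcb : c ≤ b := le_sqrt_of_sq_le (by nlinarith)
  have ha : 0 < a := hε.trans_le hεa
  have hab : a ≤ b := sqrt_le_sqrt (by nlinarith)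
  have ha2 : a ^ 2 = c ^ 2 + ε ^ 2 * s ^ 2 := sq_sqrt (by positivity)
  have hba : b ≤ a + ε * c := sqrt_le_iff.2
    ⟨by positivity, by nlinarith [mul_nonneg (mul_nonneg ha.le hε.le) hc]⟩
  have h1s : 1 - s ≤ c := by nlinarith
  rw [div_sub_div _ _ ha.ne' (ha.trans_le hab).ne', abs_le, le_div_iff₀ (by positivity),
    div_le_iff₀ (by positivity)]
  constructor <;> nlinarith [mul_le_mul hεa hcb hc ha.le, mul_le_mul_of_nonneg_right h1s ha.le,
    mul_le_mul_of_nonneg_right hcb ha.le]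

lemma tendsto_inv_sqrt_sub_div_sqrt {c s : ℝ} (hc : 0 < c) (hsc : s ^ 2 + c ^ 2 = 1) :
    Tendsto (fun ε : ℝ => 1 / √(c ^ 2 + ε ^ 2 * s ^ 2) - s / √(c ^ 2 + ε ^ 2)) (𝓝 0)
      (𝓝 (c / (1 + s))) := by
  have hs : 0 < 1 + s := by nlinarith
  have hlim : c / (1 + s) = 1 / √(c ^ 2 + 0 ^ 2 * s ^ 2) - s / √(c ^ 2 + 0 ^ 2) := by
    rw [zero_pow two_ne_zero, zero_mul, add_zero, sqrt_sq hc.le]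
    field_simp
    linear_combination hsc
  rw [hlim]
  refine ((continuous_const.div (by fun_prop) fun ε => ?_).sub
    (continuous_const.div (by fun_prop) fun ε => ?_)).tendsto 0 <;>
  exact (sqrt_pos.2 (by positivity)).ne'

lemma tendsto_integral_inv_sqrt_sub_div_sqrt :
    Tendsto (fun ε => ∫ α in 0..π / 2,
        (1 / √(cos α ^ 2 + ε ^ 2 * sin α ^ 2) - sin α / √(cos α ^ 2 + ε ^ 2)))
      (𝓝[>] 0) (𝓝 (log 2)) := by
  rw [← integral_cos_div_one_add_sin]
  have hIoc : uIoc 0 (π / 2) = Ioc 0 (π / 2) := uIoc_of_le (by positivity)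
  refine tendsto_integral_filter_of_dominated_convergence (fun _ => 2) ?_ ?_
    intervalIntegrable_const ?_
  · filter_upwards [self_mem_nhdsWithin] with ε (hε : 0 < ε)
    exact ((continuous_inv_sqrt_cos_sq_add_sq_mul_sin_sq hε.ne').sub
      (continuous_sin_div_sqrt_cos_sq_add_sq hε.ne')).aestronglyMeasurable
  · filter_upwards [Ioc_mem_nhdsGT zero_lt_one] with ε hε
    refine ae_of_all _ fun α hα => ?_
    rw [hIoc] at hα
    rw [norm_eq_abs]
    exact abs_inv_sqrt_sub_div_sqrt_le (cos_nonneg_of_mem_Icc ⟨by linarith [hα.1, pi_pos], hα.2⟩)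
      (sin_nonneg_of_nonneg_of_le_pi hα.1.le (by linarith [hα.2, pi_pos]))
      (sin_sq_add_cos_sq α) hε.1 hε.2
  · filter_upwards [volume.ae_ne (π / 2)] with α hne hα
    rw [hIoc] at hα
    exact (tendsto_inv_sqrt_sub_div_sqrt (cos_pos_of_mem_Ioo
      ⟨by linarith [hα.1, pi_pos], lt_of_le_of_ne hα.2 hne⟩) (sin_sq_add_cos_sq α)).mono_left
      nhdsWithin_le_nhds

theorem tendsto_ellipticK_sqrt_one_sub_sq_add_log :
    Tendsto (fun ε => ellipticK √(1 - ε ^ 2) + log ε) (𝓝[>] 0) (𝓝 (log 4)) := by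
  have hsqrt : Tendsto (fun ε : ℝ => log (1 + √(1 + ε ^ 2))) (𝓝[>] 0) (𝓝 (log 2)) := by
    have hcont : Continuous fun ε : ℝ => log (1 + √(1 + ε ^ 2)) :=
      Continuous.log (by fun_prop) fun ε => (by positivity : 0 < 1 + √(1 + ε ^ 2)).ne'
    simpa [one_add_one_eq_two] using (hcont.tendsto 0).mono_left nhdsWithin_le_nhds
  have h4 : log 4 = log 2 + log 2 := by
    rw [← log_mul two_ne_zero two_ne_zero]; norm_num
  rw [h4]
  refine (tendsto_integral_inv_sqrt_sub_div_sqrt.add hsqrt).congr' ?_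
  filter_upwards [Ioc_mem_nhdsGT zero_lt_one] with ε hε
  have hε2 : ε ^ 2 ≤ 1 := by nlinarith [hε.1, hε.2]
  rw [ellipticK_sqrt_one_sub_sq hε2, intervalIntegral.integral_sub
    ((continuous_inv_sqrt_cos_sq_add_sq_mul_sin_sq hε.1.ne').intervalIntegrable _ _)
    ((continuous_sin_div_sqrt_cos_sq_add_sq hε.1.ne').intervalIntegrable _ _),
    integral_sin_div_sqrt_cos_sq_add_sq hε.1]
  ring

lemma ellipticK_nonneg (k : ℝ) : 0 ≤ ellipticK k :=
  integral_nonneg (by positivity) fun _ _ => by positivity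

lemma cos_le_sqrt_one_sub_sq_mul_sin_sq {k : ℝ} (hk : k ^ 2 ≤ 1) (α : ℝ) :
    cos α ≤ √(1 - k ^ 2 * sin α ^ 2) :=
  le_sqrt_of_sq_le (by nlinarith [sin_sq_add_cos_sq α, sq_nonneg (sin α)])

lemma one_le_ellipticE {k : ℝ} (hk : k ^ 2 ≤ 1) : 1 ≤ ellipticE k := by
  calc (1 : ℝ) = ∫ α in 0..π / 2, cos α := by simp
    _ ≤ ellipticE k := integral_mono (by positivity) (continuous_cos.intervalIntegrable _ _)
        ((by fun_prop : Continuous fun α => √(1 - k ^ 2 * sin α ^ 2)).intervalIntegrable _ _)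
        (cos_le_sqrt_one_sub_sq_mul_sin_sq hk)

-- With `A = 1 - k² sin² α`: `A - (1 - k²) = k² cos² α ≤ cos α * √A` on `[0, π/2]`.
lemma ellipticE_le {k : ℝ} (hk : k ^ 2 < 1) : ellipticE k ≤ 1 + (1 - k ^ 2) * ellipticK k := by
  have hA : ∀ α, 0 < 1 - k ^ 2 * sin α ^ 2 := fun α => by
    nlinarith [sin_sq_le_one α, sq_nonneg k]
  have hK : Continuous fun α => 1 / √(1 - k ^ 2 * sin α ^ 2) :=
    continuous_const.div (by fun_prop) fun α => (sqrt_pos.2 (hA α)).ne'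
  have hpt : ∀ α ∈ Icc 0 (π / 2),
      √(1 - k ^ 2 * sin α ^ 2) ≤ cos α + (1 - k ^ 2) * (1 / √(1 - k ^ 2 * sin α ^ 2)) := by
    intro α hα
    have hc : 0 ≤ cos α := cos_nonneg_of_mem_Icc ⟨by linarith [hα.1, pi_pos], hα.2⟩
    have hr := sqrt_pos.2 (hA α)
    have hr2 := sq_sqrt (hA α).le
    have hcr := cos_le_sqrt_one_sub_sq_mul_sin_sq hk.le α
    rw [mul_one_div, ← sub_le_iff_le_add', le_div_iff₀ hr]
    nlinarith [sin_sq_add_cos_sq α, mul_le_mul_of_nonneg_left hcr hc, sq_nonneg (cos α)]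
  calc ellipticE k ≤ ∫ α in 0..π / 2, (cos α + (1 - k ^ 2) * (1 / √(1 - k ^ 2 * sin α ^ 2))) :=
        integral_mono_on (by positivity)
          ((by fun_prop : Continuous fun α => √(1 - k ^ 2 * sin α ^ 2)).intervalIntegrable _ _)
          ((continuous_cos.add (continuous_const.mul hK)).intervalIntegrable _ _) hpt
    _ = 1 + (1 - k ^ 2) * ellipticK k := by
        rw [intervalIntegral.integral_add (continuous_cos.intervalIntegrable _ _)
          ((hK.intervalIntegrable _ _).const_mul _), intervalIntegral.integral_const_mul]
        simp [ellipticK]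

lemma kappaT_sq (τ : ℝ) : kappaT τ ^ 2 = exp (-8 * τ) := by
  rw [kappaT, ← exp_nat_mul]
  ring_nf

lemma kappa_eq_sqrt (τ : ℝ) : kappa τ = √(1 - kappaT τ ^ 2) := by
  rw [kappa, kappaT_sq]

lemma kappa_sq {τ : ℝ} (hτ : 0 ≤ τ) : kappa τ ^ 2 = 1 - kappaT τ ^ 2 := by
  have h : kappaT τ ^ 2 ≤ 1 := by
    rw [kappaT_sq]
    exact exp_le_one_iff.2 (by linarith)
  rw [kappa_eq_sqrt, sq_sqrt (sub_nonneg.2 h)]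

lemma tendsto_kappaT : Tendsto kappaT atTop (𝓝[>] 0) := by
  refine tendsto_nhdsWithin_iff.2 ⟨?_, Eventually.of_forall fun τ => exp_pos _⟩
  exact tendsto_exp_atBot.comp (tendsto_id.const_mul_atTop_of_neg (by norm_num))

lemma tendsto_ellipticK_kappa_sub :
    Tendsto (fun τ => ellipticK (kappa τ) - (4 * τ + log 4)) atTop (𝓝 0) := by
  have h := (tendsto_ellipticK_sqrt_one_sub_sq_add_log.comp tendsto_kappaT).sub_const (log 4)
  rw [sub_self] at h
  refine h.congr fun τ => ?_
  rw [Function.comp_apply, ← kappa_eq_sqrt, kappaT, log_exp]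
  ring

lemma tendsto_kappaT_mul_add_log :
    Tendsto (fun τ => kappaT τ * (4 * τ + log 4)) atTop (𝓝 0) := by
  have h4 : Tendsto (fun τ : ℝ => 4 * τ) atTop atTop := tendsto_id.const_mul_atTop (by norm_num)
  have h := ((tendsto_pow_mul_exp_neg_atTop_nhds_zero 1).comp h4).add
    ((tendsto_exp_neg_atTop_nhds_zero.comp h4).const_mul (log 4))
  rw [mul_zero, add_zero] at h
  refine h.congr fun τ => ?_
  simp only [Function.comp_apply, kappaT, pow_one]
  ring_nf

lemma tendsto_kappaT_mul_ellipticK :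
    Tendsto (fun τ => kappaT τ * ellipticK (kappa τ)) atTop (𝓝 0) := by
  have h := ((tendsto_kappaT.mono_right nhdsWithin_le_nhds).mul tendsto_ellipticK_kappa_sub).add
    tendsto_kappaT_mul_add_log
  rw [mul_zero, add_zero] at h
  exact h.congr fun τ => by ring

lemma ellipticE_kappa_sub_one_mem_Icc {τ : ℝ} (hτ : 0 ≤ τ) :
    ellipticE (kappa τ) - 1 ∈ Icc 0 (kappaT τ * (kappaT τ * ellipticK (kappa τ))) := by
  have hk := kappa_sq hτ
  have hε : 0 < kappaT τ ^ 2 := pow_pos (exp_pos _) 2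
  constructor
  · linarith [one_le_ellipticE (k := kappa τ) (by linarith)]
  · have := ellipticE_le (k := kappa τ) (by linarith)
    rw [hk] at this
    linarith

lemma tendsto_ellipticE_kappa_sub_one :
    Tendsto (fun τ => ellipticE (kappa τ) - 1) atTop (𝓝 0) := by
  have h := (tendsto_kappaT.mono_right nhdsWithin_le_nhds).mul tendsto_kappaT_mul_ellipticK
  rw [mul_zero] at h
  refine squeeze_zero' ?_ ?_ h <;> filter_upwards [eventually_ge_atTop 0] with τ hτ
  exacts [(ellipticE_kappa_sub_one_mem_Icc hτ).1, (ellipticE_kappa_sub_one_mem_Icc hτ).2]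

lemma tendsto_ellipticE_kappa_sub_one_mul_ellipticK :
    Tendsto (fun τ => (ellipticE (kappa τ) - 1) * ellipticK (kappa τ)) atTop (𝓝 0) := by
  have h := tendsto_kappaT_mul_ellipticK.pow 2
  rw [zero_pow two_ne_zero] at h
  refine squeeze_zero' ?_ ?_ h <;> filter_upwards [eventually_ge_atTop 0] with τ hτ
  · exact mul_nonneg (ellipticE_kappa_sub_one_mem_Icc hτ).1 (ellipticK_nonneg _)
  · calc (ellipticE (kappa τ) - 1) * ellipticK (kappa τ)
        ≤ kappaT τ * (kappaT τ * ellipticK (kappa τ)) * ellipticK (kappa τ) :=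
          mul_le_mul_of_nonneg_right (ellipticE_kappa_sub_one_mem_Icc hτ).2 (ellipticK_nonneg _)
      _ = (kappaT τ * ellipticK (kappa τ)) ^ 2 := by ring

lemma tendsto_mul_div_one_sub_sq_sub {ι : Type*} {l : Filter ι} {K E L ε : ι → ℝ}
    (hKL : Tendsto (fun i => K i - L i) l (𝓝 0)) (hE : Tendsto (fun i => E i - 1) l (𝓝 0))
    (hEK : Tendsto (fun i => (E i - 1) * K i) l (𝓝 0))
    (hεK : Tendsto (fun i => ε i * K i) l (𝓝 0)) (hε : Tendsto ε l (𝓝 0)) :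
    Tendsto (fun i => (E i - ε i ^ 2 * K i) * (K i - E i) / (1 - ε i ^ 2) - (L i - 1)) l
      (𝓝 0) := by
  -- The numerator is a polynomial without constant term in `K - L`, `E - 1`, `(E - 1) * K`,
  -- `ε * K` and `ε`.
  have hN : Tendsto (fun i => (E i - ε i ^ 2 * K i) * (K i - E i) - (L i - 1) * (1 - ε i ^ 2))
      l (𝓝 0) := by
    have h := (((((((hKL.add hEK).sub (hE.const_mul 2)).sub (hE.pow 2)).sub (hεK.pow 2)).add
      ((hε.mul hεK).mul (hE.const_add 2))).sub ((hε.pow 2).mul hKL)).sub (hε.pow 2))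
    norm_num at h
    exact h.congr fun i => by ring
  have hden : Tendsto (fun i => 1 - ε i ^ 2) l (𝓝 1) := by
    simpa using (hε.pow 2).const_sub 1
  have h := hN.div hden one_ne_zero
  rw [zero_div] at h
  refine h.congr' ?_
  filter_upwards [hden.eventually_ne one_ne_zero] with i hi
  simp only [Pi.div_apply]
  field_simp

/-- Asymptotics of the covariance matrix entries as τ → ∞. -/
theorem stmt_6 :
    Tendsto (fun τ => G₁₁ τ + (4 / Real.pi ^ 2) * (4 * τ + Real.log 4 - 1)) atTop (𝓝 0) ∧
    Tendsto (fun τ => G₁₂ τ - (4 / Real.pi ^ 2) * (4 * τ + Real.log 4)) atTop (𝓝 0) := by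
  have hKL := tendsto_ellipticK_kappa_sub
  have hEK := tendsto_ellipticE_kappa_sub_one_mul_ellipticK
  constructor
  · have h := (tendsto_mul_div_one_sub_sq_sub hKL tendsto_ellipticE_kappa_sub_one hEK
      tendsto_kappaT_mul_ellipticK (tendsto_kappaT.mono_right nhdsWithin_le_nhds)).const_mul
      (-(4 / π ^ 2))
    rw [mul_zero] at h
    refine h.congr' ?_
    filter_upwards [eventually_ge_atTop 0] with τ hτ
    rw [G₁₁, kappa_sq hτ, ← div_div]
    ring
  · have h := (hKL.add hEK).const_mul (4 / π ^ 2)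
    rw [add_zero, mul_zero] at h
    exact h.congr fun τ => by rw [G₁₂]; ring
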